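/- Let p ∈ (0,1), q < 0, and p' = p/(p-1). Let X be a metric space with a σ-finite Borel measure μ, fix a ∈ X, and let u, v : X → (0,∞) be measurable and locally integrable. If there is a constant C > 0 such that (∫_X (∫_{B(a,d(x,a))} f dμ)^q u(x) dμ(x))^{1/q} ≥ C (∫_X f(x)^p v(x) dμ(x))^{1/p} for every measurable f : X → [0,∞], then for every x ≠ a one has (∫_{X∖B(a,d(x,a))} u dμ)^{1/q} · (∫_{B(a,d(x,a))} v^{1-p'} dμ)^{1/p'} ≥ C; in particular D₁ := inf_{x ≠ a} of this quantity satisfies D₁ ≥ C > 0. -/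

import Mathlib

open MeasureTheory ENNReal Filter Topology

/-!
Test the inequality on `f = E.indicator w` with `w = v ^ (1 - p')`, for which `w ^ p * v = w`:
then `∫ f ^ p v = ∫_E w` while every ball integral of `f` is at most `∫_E w`, so, as `q < 0`,
`C (∫_E w)^(1/p) ≤ ((∫_E w)^q ∫_X u)^(1/q)`, i.e. `C ≤ (∫_X u)^(1/q) (∫_E w)^(1/p')` whenever
`0 < ∫_E w < ∞`. By σ-finiteness there are such `E` of arbitrarily large `w`-mass, which forces
`∫_X w < ∞` (as `(∫_E w)^(1/p') → 0`) and `∫_X u < ∞`. The bound then holds for every measurable set, and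
`∫_{Bᶜ} u ≤ ∫_X u` with `1/q < 0` finishes the proof.
-/

namespace ENNReal

lemma rpow_le_rpow_of_nonpos {x y : ℝ≥0∞} {z : ℝ} (hxy : x ≤ y) (hz : z ≤ 0) :
    y ^ z ≤ x ^ z := by
  rw [← neg_neg z, rpow_neg y, rpow_neg x]
  exact ENNReal.inv_le_inv.2 (rpow_le_rpow hxy (neg_nonneg.2 hz))

lemma rpow_rpow_mul_self {x : ℝ≥0∞} (hx0 : x ≠ 0) (hx : x ≠ ∞) {r s : ℝ} (h : r * s + 1 = r) :
    (x ^ r) ^ s * x = x ^ r := by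
  conv_rhs => rw [← h, rpow_add _ _ hx0 hx, rpow_one, rpow_mul]

lemma le_rpow_mul_rpow_of_mul_rpow_le {C J U : ℝ≥0∞} {p q p' : ℝ} (hq : q < 0)
    (hpp' : 1 / p + 1 / p' = 1) (hJ0 : J ≠ 0) (hJ : J ≠ ∞)
    (h : C * J ^ (1 / p) ≤ (J ^ q * U) ^ (1 / q)) : C ≤ U ^ (1 / q) * J ^ (1 / p') := by
  rcases eq_or_ne U 0 with rfl | hU0
  · rw [zero_rpow_of_neg (one_div_neg.2 hq), top_mul (rpow_pos (pos_iff_ne_zero.2 hJ0) hJ).ne']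
    exact le_top
  have hJp0 : J ^ (1 / p) ≠ 0 := (rpow_pos (pos_iff_ne_zero.2 hJ0) hJ).ne'
  refine (ENNReal.mul_le_mul_iff_left hJp0 (rpow_ne_top_of_ne_zero hJ0 hJ)).1 ?_
  calc C * J ^ (1 / p) ≤ (J ^ q * U) ^ (1 / q) := h
    _ = U ^ (1 / q) * J ^ (1 / p') * J ^ (1 / p) := by
      rw [mul_rpow_of_ne_zero (rpow_pos (pos_iff_ne_zero.2 hJ0) hJ).ne' hU0, ← rpow_mul,
        mul_one_div_cancel hq.ne, rpow_one, mul_assoc, ← rpow_add _ _ hJ0 hJ, add_comm, hpp',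
        rpow_one, mul_comm]

end ENNReal

namespace MeasureTheory

lemma lintegral_ne_zero_of_forall_pos {X : Type*} [MeasurableSpace X] {μ : Measure X} [NeZero μ]
    {f : X → ℝ≥0∞} (hf : Measurable f) (hpos : ∀ x, 0 < f x) : ∫⁻ x, f x ∂μ ≠ 0 := by
  rw [← pos_iff_ne_zero, lintegral_pos_iff_support hf,
    Function.support_eq_univ fun x => (hpos x).ne']
  exact pos_iff_ne_zero.2 (NeZero.ne _)

end MeasureTheory

section ReverseHardy

variable {X : Type*} [MetricSpace X] [MeasurableSpace X] {μ : Measure X} {a : X}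
  {p q p' : ℝ} {u v w : X → ℝ≥0∞} {C : ℝ≥0∞}

def ReverseHardyInequality (μ : Measure X) (a : X) (p q : ℝ) (u v : X → ℝ≥0∞) (C : ℝ≥0∞) :
    Prop :=
  ∀ f : X → ℝ≥0∞, Measurable f →
    (∫⁻ x, (∫⁻ y in Metric.ball a (dist x a), f y ∂μ) ^ q * u x ∂μ) ^ (1 / q) ≥
      C * (∫⁻ x, (f x) ^ p * v x ∂μ) ^ (1 / p)

namespace ReverseHardyInequality

theorem le_rpow_lintegral_mul_rpow_setLIntegral_of_ne_zero_of_ne_top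
    (h : ReverseHardyInequality μ a p q u v C) (hp : 0 < p) (hq : q < 0)
    (hpp' : 1 / p + 1 / p' = 1) (hw : Measurable w) (hwv : ∀ x, w x ^ p * v x = w x)
    {E : Set X} (hE : MeasurableSet E) (hE0 : ∫⁻ y in E, w y ∂μ ≠ 0)
    (hEtop : ∫⁻ y in E, w y ∂μ ≠ ∞) :
    C ≤ (∫⁻ x, u x ∂μ) ^ (1 / q) * (∫⁻ y in E, w y ∂μ) ^ (1 / p') := by
  set J := ∫⁻ y in E, w y ∂μ
  have hf : ∫⁻ y, E.indicator w y ∂μ = J := lintegral_indicator hE w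
  have hweighted : ∫⁻ x, E.indicator w x ^ p * v x ∂μ = J := by
    rw [← hf]
    congr with x
    by_cases hx : x ∈ E <;> simp [hx, hwv, zero_rpow_of_pos hp]
  have hball (x : X) : J ^ q ≤ (∫⁻ y in Metric.ball a (dist x a), E.indicator w y ∂μ) ^ q :=
    rpow_le_rpow_of_nonpos (hf ▸ setLIntegral_le_lintegral _ _) hq.le
  refine le_rpow_mul_rpow_of_mul_rpow_le hq hpp' hE0 hEtop ?_
  calc C * J ^ (1 / p) ≤ _ := hweighted ▸ h _ (hw.indicator hE)
    _ ≤ (J ^ q * ∫⁻ x, u x ∂μ) ^ (1 / q) := by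
      refine rpow_le_rpow_of_nonpos ?_ (one_div_neg.2 hq).le
      calc J ^ q * ∫⁻ x, u x ∂μ ≤ ∫⁻ x, J ^ q * u x ∂μ := lintegral_const_mul_le _ _
        _ ≤ _ := lintegral_mono fun x => mul_le_mul_left (hball x) _

theorem lintegral_weight_ne_top (h : ReverseHardyInequality μ a p q u v C) (hp : 0 < p)
    (hq : q < 0) (hpp' : 1 / p + 1 / p' = 1) [SigmaFinite μ] (hC : 0 < C) (hw : Measurable w)
    (hw_pos : ∀ x, 0 < w x) (hw_top : ∀ x, w x ≠ ∞) (hwv : ∀ x, w x ^ p * v x = w x) :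
    ∫⁻ x, u x ∂μ ≠ ∞ := by
  intro hu_top
  rcases eq_zero_or_neZero μ with rfl | _
  · simp at hu_top
  have : SigmaFinite (μ.withDensity w) := SigmaFinite.withDensity_of_ne_top' hw_top
  obtain ⟨E, hE, -, hE0, hEtop⟩ :=
    Measure.exists_subset_measure_lt_top (μ := μ.withDensity w) (r := 0) MeasurableSet.univ (by
      rw [withDensity_apply _ MeasurableSet.univ, Measure.restrict_univ, pos_iff_ne_zero]
      exact lintegral_ne_zero_of_forall_pos hw hw_pos)
  rw [withDensity_apply _ hE] at hE0 hEtop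
  have hCle :=
    h.le_rpow_lintegral_mul_rpow_setLIntegral_of_ne_zero_of_ne_top hp hq hpp' hw hwv hE hE0.ne'
      hEtop.ne
  rw [hu_top, top_rpow_of_neg (one_div_neg.2 hq), zero_mul] at hCle
  exact hC.ne' (nonpos_iff_eq_zero.1 hCle)

theorem lintegral_dual_weight_ne_top (h : ReverseHardyInequality μ a p q u v C) (hp : 0 < p)
    (hq : q < 0) (hpp' : 1 / p + 1 / p' = 1) (hp' : p' < 0) [SigmaFinite μ] (hC : 0 < C)
    (hu : Measurable u) (hu_pos : ∀ x, 0 < u x) (hw : Measurable w) (hw_top : ∀ x, w x ≠ ∞)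
    (hwv : ∀ x, w x ^ p * v x = w x) :
    ∫⁻ x, w x ∂μ ≠ ∞ := by
  intro hw_inf
  rcases eq_zero_or_neZero μ with rfl | _
  · simp at hw_inf
  have : SigmaFinite (μ.withDensity w) := SigmaFinite.withDensity_of_ne_top' hw_top
  have hU : (∫⁻ x, u x ∂μ) ^ (1 / q) ≠ ∞ := by
    simp [rpow_eq_top_iff, lintegral_ne_zero_of_forall_pos hu hu_pos, hq.le]
  have hbound (n : ℕ) : C ≤ (∫⁻ x, u x ∂μ) ^ (1 / q) * (n : ℝ≥0∞) ^ (1 / p') := by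
    obtain ⟨E, hE, -, hnE, hEtop⟩ :=
      Measure.exists_subset_measure_lt_top (μ := μ.withDensity w) (r := n) MeasurableSet.univ (by
        rw [withDensity_apply _ MeasurableSet.univ, Measure.restrict_univ, hw_inf]
        exact natCast_lt_top n)
    rw [withDensity_apply _ hE] at hnE hEtop
    calc C ≤ _ :=
          h.le_rpow_lintegral_mul_rpow_setLIntegral_of_ne_zero_of_ne_top hp hq hpp' hw hwv hE
            (ne_bot_of_gt hnE) hEtop.ne
      _ ≤ _ := mul_le_mul' le_rfl (rpow_le_rpow_of_nonpos hnE.le (one_div_neg.2 hp').le)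
  have hlim : Tendsto (fun n : ℕ => (∫⁻ x, u x ∂μ) ^ (1 / q) * (n : ℝ≥0∞) ^ (1 / p')) atTop
      (𝓝 0) := by
    have hpow : Tendsto (fun n : ℕ => (n : ℝ≥0∞) ^ (1 / p')) atTop (𝓝 0) := by
      have hcont := (continuous_rpow_const (y := 1 / p')).tendsto ⊤
      rw [top_rpow_of_neg (one_div_neg.2 hp')] at hcont
      exact hcont.comp tendsto_nat_nhds_top
    simpa using ENNReal.Tendsto.const_mul hpow (Or.inr hU)
  exact hC.ne' (nonpos_iff_eq_zero.1 (ge_of_tendsto' hlim hbound))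

theorem le_rpow_lintegral_mul_rpow_setLIntegral (h : ReverseHardyInequality μ a p q u v C)
    (hp : 0 < p) (hq : q < 0) (hpp' : 1 / p + 1 / p' = 1) (hp' : p' < 0) [SigmaFinite μ]
    (hC : 0 < C) (hu : Measurable u) (hu_pos : ∀ x, 0 < u x) (hw : Measurable w)
    (hw_pos : ∀ x, 0 < w x) (hw_top : ∀ x, w x ≠ ∞) (hwv : ∀ x, w x ^ p * v x = w x)
    {B : Set X} (hB : MeasurableSet B) :
    C ≤ (∫⁻ x, u x ∂μ) ^ (1 / q) * (∫⁻ y in B, w y ∂μ) ^ (1 / p') := by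
  by_cases hB0 : ∫⁻ y in B, w y ∂μ = 0
  · have hU : (∫⁻ x, u x ∂μ) ^ (1 / q) ≠ 0 := by
      simp [rpow_eq_zero_iff, hq.le,
        h.lintegral_weight_ne_top hp hq hpp' hC hw hw_pos hw_top hwv]
    rw [hB0, zero_rpow_of_neg (one_div_neg.2 hp'), mul_top hU]
    exact le_top
  exact h.le_rpow_lintegral_mul_rpow_setLIntegral_of_ne_zero_of_ne_top hp hq hpp' hw hwv hB hB0 <|
    ne_top_of_le_ne_top (h.lintegral_dual_weight_ne_top hp hq hpp' hp' hC hu hu_pos hw hw_top hwv)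
      (setLIntegral_le_lintegral B w)

end ReverseHardyInequality

end ReverseHardy

theorem reverse_integral_hardy_necessity_general
    {X : Type*} [MetricSpace X] [MeasurableSpace X] [BorelSpace X]
    (μ : Measure X) [SigmaFinite μ] (a : X)
    (p q p' : ℝ) (hp : p ∈ Set.Ioo (0:ℝ) 1) (hq : q < 0) (hp' : p' = p / (p - 1))
    (u v : X → ℝ≥0∞) (hu : Measurable u) (hv : Measurable v)
    (hu_pos : ∀ x, 0 < u x)
    (hv_pos : ∀ x, 0 < v x) (hv_lt : ∀ x, v x < ∞)
    (C : ℝ≥0∞) (hC_pos : 0 < C)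
    (hineq : ∀ f : X → ℝ≥0∞, Measurable f →
      (∫⁻ x, (∫⁻ y in Metric.ball a (dist x a), f y ∂μ) ^ q * u x ∂μ) ^ (1 / q) ≥
        C * (∫⁻ x, (f x) ^ p * v x ∂μ) ^ (1 / p)) :
    (∀ x : X, x ≠ a →
      (∫⁻ y in (Metric.ball a (dist x a))ᶜ, u y ∂μ) ^ (1 / q) *
        (∫⁻ y in Metric.ball a (dist x a), (v y) ^ (1 - p') ∂μ) ^ (1 / p') ≥ C) ∧
    (⨅ (x : X) (_ : x ≠ a),
      (∫⁻ y in (Metric.ball a (dist x a))ᶜ, u y ∂μ) ^ (1 / q) *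
        (∫⁻ y in Metric.ball a (dist x a), (v y) ^ (1 - p') ∂μ) ^ (1 / p')) ≥ C := by
  obtain ⟨hp0, hp1⟩ := hp
  have hp_sub : p - 1 ≠ 0 := sub_ne_zero.2 hp1.ne
  have hp'_neg : p' < 0 := hp' ▸ div_neg_of_pos_of_neg hp0 (by linarith)
  have hconj : 1 / p + 1 / p' = 1 := by
    rw [hp', one_div_div]
    field_simp
    ring
  have hexp : (1 - p') * p + 1 = 1 - p' := by
    rw [hp']
    field_simp
    ring
  have hHardy : ReverseHardyInequality μ a p q u v C := hineq
  have hbound (x : X) :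
      C ≤ (∫⁻ y in (Metric.ball a (dist x a))ᶜ, u y ∂μ) ^ (1 / q) *
        (∫⁻ y in Metric.ball a (dist x a), (v y) ^ (1 - p') ∂μ) ^ (1 / p') :=
    (hHardy.le_rpow_lintegral_mul_rpow_setLIntegral hp0 hq hconj hp'_neg hC_pos hu hu_pos
      (hv.pow_const _) (fun y => rpow_pos (hv_pos y) (hv_lt y).ne)
      (fun y => rpow_ne_top_of_ne_zero (hv_pos y).ne' (hv_lt y).ne)
      (fun y => rpow_rpow_mul_self (hv_pos y).ne' (hv_lt y).ne hexp) measurableSet_ball).trans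
      (mul_le_mul' (rpow_le_rpow_of_nonpos (setLIntegral_le_lintegral _ _) (one_div_neg.2 hq).le)
        le_rfl)
  exact ⟨fun x _ => hbound x, le_iInf₂ fun x _ => hbound x⟩

/-- Necessity of the condition `D₁ > 0` for the reverse integral Hardy inequality
on a metric measure space: any admissible constant `C` is a lower bound for the
quantity defining `D₁`, so `D₁ ≥ C > 0`. -/
theorem reverse_integral_hardy_necessity
    {X : Type*} [MetricSpace X] [MeasurableSpace X] [BorelSpace X]
    (μ : Measure X) [SigmaFinite μ] (a : X)
    (p q p' : ℝ) (hp : p ∈ Set.Ioo (0:ℝ) 1) (hq : q < 0) (hp' : p' = p / (p - 1))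
    (u v : X → ℝ≥0∞) (hu : Measurable u) (hv : Measurable v)
    (hu_pos : ∀ x, 0 < u x) (hu_lt : ∀ x, u x < ∞)
    (hv_pos : ∀ x, 0 < v x) (hv_lt : ∀ x, v x < ∞)
    (hu_loc : ∀ K : Set X, IsCompact K → ∫⁻ x in K, u x ∂μ < ∞)
    (hv_loc : ∀ K : Set X, IsCompact K → ∫⁻ x in K, v x ∂μ < ∞)
    (C : ℝ≥0∞) (hC_pos : 0 < C)
    (hineq : ∀ f : X → ℝ≥0∞, Measurable f →
      (∫⁻ x, (∫⁻ y in Metric.ball a (dist x a), f y ∂μ) ^ q * u x ∂μ) ^ (1 / q) ≥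
        C * (∫⁻ x, (f x) ^ p * v x ∂μ) ^ (1 / p)) :
    (∀ x : X, x ≠ a →
      (∫⁻ y in (Metric.ball a (dist x a))ᶜ, u y ∂μ) ^ (1 / q) *
        (∫⁻ y in Metric.ball a (dist x a), (v y) ^ (1 - p') ∂μ) ^ (1 / p') ≥ C) ∧
    (⨅ (x : X) (_ : x ≠ a),
      (∫⁻ y in (Metric.ball a (dist x a))ᶜ, u y ∂μ) ^ (1 / q) *
        (∫⁻ y in Metric.ball a (dist x a), (v y) ^ (1 - p') ∂μ) ^ (1 / p')) ≥ C :=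
  reverse_integral_hardy_necessity_general μ a p q p' hp hq hp' u v hu hv hu_pos hv_pos hv_lt C
    hC_pos hineq
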